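/- arXiv:math/0502165 — 2 statements merged into one kernel-verified Lean document; each statement's English description precedes it below -/
import Mathlib

section
/- For λ = Σ_{i=1}^r m_i ω_i with m_i ∈ ℕ, the cardinality of the set B^r(λ) of tuples (ℓ_{i,j}, s_{i,j})_{1 ≤ i ≤ j ≤ r}, where each s_{i,j} is a weakly increasing sequence of length ℓ_{i,j} of nonnegative integers satisfying s_{i,j}(ℓ_{i,j}) ≤ m_i + Σ_{p=j+1}^{r} ℓ_{i+1,p} − Σ_{p=j}^{r} ℓ_{i,p} (or ℓ_{i,j} = 0), equals Π_{i=1}^{r} C(r+1, i)^{m_i}. -/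
/-!
Peel off the last column. An element of `B^{r+1}(λ)` is the same as its last column
`(ℓ_{i,r+1}, s_{i,r+1})_{1 ≤ i ≤ r+1}`, where `s_{i,r+1}` is weakly increasing of length
`ℓ_{i,r+1} ≤ m_i` with entries at most `m_i - ℓ_{i,r+1}`, together with an element of `B^r(λ')`
for `m'_i = m_i + ℓ_{i+1,r+1} - ℓ_{i,r+1}`. By stars and bars there are `C(m_i, ℓ)` last-column
entries of length `ℓ` in row `i`, so by induction the count is
`Σ_ℓ Π_i C(m_i, ℓ_i) C(r+1, i)^{m_i - ℓ_i} C(r+1, i-1)^{ℓ_i} = Π_i C(r+2, i)^{m_i}`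
(binomial theorem and Pascal's rule, row by row).
-/

open Finset

theorem Fin.monotone_snoc_iff {α : Type*} [Preorder α] {n : ℕ} {s : Fin n → α} {a : α} :
    Monotone (Fin.snoc s a : Fin (n + 1) → α) ↔ Monotone s ∧ ∀ i, s i ≤ a := by
  refine ⟨fun h => ⟨fun i j hij => ?_, fun i => ?_⟩, fun ⟨hs, ha⟩ => ?_⟩
  · simpa using h (Fin.castSucc_le_castSucc_iff.2 hij)
  · simpa using h (Fin.le_last i.castSucc)
  · intro i j hij
    induction j using Fin.lastCases with
    | last => induction i using Fin.lastCases <;> simp [ha]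
    | cast j =>
      induction i using Fin.lastCases with
      | last => exact absurd hij (Fin.castSucc_lt_last j).not_ge
      | cast i => simpa using hs (Fin.castSucc_le_castSucc_iff.1 hij)

abbrev MonoSeq (k D : ℕ) : Type := {s : Fin k → ℕ // Monotone s ∧ ∀ i, s i ≤ D}

namespace MonoSeq

noncomputable instance (k D : ℕ) : Fintype (MonoSeq k D) :=
  have := Finite.of_injective
    (fun (s : MonoSeq k D) i => (⟨s.1 i, Nat.lt_succ_of_le (s.2.2 i)⟩ : Fin (D + 1)))
    fun _ _ h => Subtype.ext <| funext fun i => congrArg Fin.val (congrFun h i)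
  Fintype.ofFinite _

def snocEquiv (k D : ℕ) : MonoSeq (k + 1) D ≃ Σ d : Fin (D + 1), MonoSeq k d where
  toFun s :=
    have h := Fin.monotone_snoc_iff.1 ((Fin.snoc_init_self s.1).symm ▸ s.2.1)
    ⟨⟨s.1 (Fin.last k), Nat.lt_succ_of_le (s.2.2 _)⟩, Fin.init s.1, h⟩
  invFun p := ⟨Fin.snoc p.2.1 p.1, Fin.monotone_snoc_iff.2 p.2.2, fun i => by
    induction i using Fin.lastCases with
    | last => simpa using Nat.le_of_lt_succ p.1.2
    | cast i => simpa using (p.2.2.2 i).trans (Nat.le_of_lt_succ p.1.2)⟩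
  left_inv s := Subtype.ext (Fin.snoc_init_self s.1)
  right_inv p := Sigma.subtype_ext (Fin.ext (by simp)) (Fin.init_snoc (α := fun _ => ℕ) _ _)

theorem card (k D : ℕ) : Nat.card (MonoSeq k D) = (D + k).choose k := by
  induction k generalizing D with
  | zero =>
    rw [Nat.choose_zero_right, Nat.card_eq_one_iff_unique]
    exact ⟨⟨fun s t => Subtype.ext (funext fun i => i.elim0)⟩,
      ⟨⟨Fin.elim0, fun i => i.elim0, fun i => i.elim0⟩⟩⟩
  | succ k ih =>
    rw [Nat.card_congr (snocEquiv k D), Nat.card_sigma]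
    simp only [ih]
    rw [Fin.sum_univ_eq_sum_range (fun d => (d + k).choose k), Nat.sum_range_add_choose, add_assoc]

end MonoSeq

abbrev NatTuple : Type := Σ n, Fin n → ℕ

namespace NatTuple

def nil : NatTuple := ⟨0, Fin.elim0⟩

theorem eq_nil_of_fst_eq_zero {t : NatTuple} (h : t.1 = 0) : t = nil := by
  obtain ⟨n, s⟩ := t
  subst h
  exact congrArg _ (funext fun i => i.elim0)

def IsMonoLE (t : NatTuple) (B : ℤ) : Prop := Monotone t.2 ∧ ∀ v, (t.2 v : ℤ) ≤ B

theorem isMonoLE_of_fst_eq_zero {t : NatTuple} (h : t.1 = 0) (B : ℤ) : t.IsMonoLE B := by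
  rw [eq_nil_of_fst_eq_zero h]
  exact ⟨fun i => i.elim0, fun i => i.elim0⟩

theorem isMonoLE_iff_last_le {t : NatTuple} {B : ℤ} : t.IsMonoLE B ↔
    Monotone t.2 ∧ ∀ h : t.1 ≠ 0, (t.2 ⟨t.1 - 1, by omega⟩ : ℤ) ≤ B := by
  refine and_congr_right fun hmono => ⟨fun h _ => h _, fun h v => ?_⟩
  exact (Int.ofNat_le.2 (hmono (Fin.le_def.2 (Nat.le_sub_one_of_lt v.2)))).trans (h v.pos.ne')

def arrayEquiv {ι κ : Type*} :
    (Σ ℓ : ι → κ → ℕ, ∀ i j, Fin (ℓ i j) → ℕ) ≃ (ι → κ → NatTuple) where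
  toFun x i j := ⟨x.1 i j, x.2 i j⟩
  invFun f := ⟨fun i j => (f i j).1, fun i j => (f i j).2⟩

end NatTuple

/-- Possible entries `s_{i,r+1}` of the last column when `m_i = D`. -/
abbrev ColEntry (D : ℕ) : Type := {t : NatTuple // t.IsMonoLE (D - t.1)}

namespace ColEntry

theorem fst_le {D : ℕ} (t : ColEntry D) : t.1.1 ≤ D := by
  by_contra! h
  have := t.2.2 ⟨0, by omega⟩
  omega

def equivSigma (D : ℕ) : ColEntry D ≃ Σ k : Fin (D + 1), MonoSeq k (D - k) where
  toFun t := ⟨⟨t.1.1, Nat.lt_succ_of_le t.fst_le⟩, t.1.2, t.2.1, fun v => by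
    have := t.2.2 v; dsimp only; omega⟩
  invFun p := ⟨⟨p.1, p.2.1⟩, p.2.2.1, fun v => by
    have := p.2.2.2 v; have := p.1.2; dsimp only; omega⟩
  left_inv _ := rfl
  right_inv _ := rfl

noncomputable instance (D : ℕ) : Fintype (ColEntry D) :=
  Fintype.ofEquiv _ (equivSigma D).symm

theorem sum_fst (D : ℕ) (g : ℕ → ℕ) :
    ∑ t : ColEntry D, g t.1.1 = ∑ k ∈ range (D + 1), D.choose k * g k := by
  rw [← (equivSigma D).symm.sum_comp, Fintype.sum_sigma,
    ← Fin.sum_univ_eq_sum_range (fun k => D.choose k * g k)]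
  refine Fintype.sum_congr _ _ fun k => ?_
  change ∑ _s : MonoSeq k (D - k), g k = _
  rw [sum_const, card_univ, ← Nat.card_eq_fintype_card, MonoSeq.card,
    Nat.sub_add_cancel (Nat.le_of_lt_succ k.2), smul_eq_mul]

end ColEntry

def brBound (r : ℕ) (m : ℕ → ℕ) (f : ℕ → ℕ → NatTuple) (i j : ℕ) : ℤ :=
  m i + ∑ p ∈ Icc (j + 1) r, ((f (i + 1) p).1 : ℤ) - ∑ p ∈ Icc j r, ((f i p).1 : ℤ)

def IsBr (r : ℕ) (m : ℕ → ℕ) (f : ℕ → ℕ → NatTuple) : Prop :=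
  (∀ i j, (f i j).1 ≠ 0 → 1 ≤ i ∧ i ≤ j ∧ j ≤ r) ∧ ∀ i j, (f i j).IsMonoLE (brBound r m f i j)

/-- `B^r(λ)` for `λ = Σ mᵢ ωᵢ`, encoded as arrays `(i, j) ↦ s_{i,j}` of tuples, `ℓ_{i,j}` being the
length of `s_{i,j}`. -/
abbrev Br (r : ℕ) (m : ℕ → ℕ) : Type := {f : ℕ → ℕ → NatTuple // IsBr r m f}

theorem brBound_self {r : ℕ} {m : ℕ → ℕ} {f : ℕ → ℕ → NatTuple} {i : ℕ} :
    brBound r m f i r = m i - (f i r).1 := by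
  simp [brBound]

theorem Br.apply_eq_nil {r : ℕ} {m : ℕ → ℕ} (x : Br r m) {i j : ℕ}
    (h : ¬(1 ≤ i ∧ i ≤ j ∧ j ≤ r)) : x.1 i j = NatTuple.nil :=
  NatTuple.eq_nil_of_fst_eq_zero (not_imp_comm.1 (x.2.1 i j) h)

instance (m : ℕ → ℕ) : Unique (Br 0 m) where
  default := ⟨fun _ _ => .nil, fun _ _ h => absurd rfl h,
    fun _ _ => NatTuple.isMonoLE_of_fst_eq_zero rfl _⟩
  uniq x := Subtype.ext <| funext₂ fun _ _ => x.apply_eq_nil (by omega)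

abbrev LastCol (r : ℕ) (m : ℕ → ℕ) : Type := ∀ i : Icc 1 (r + 1), ColEntry (m i)

namespace LastCol

variable {r : ℕ} {m : ℕ → ℕ} (c : LastCol r m)

def entry (i : ℕ) : NatTuple := if h : i ∈ Icc 1 (r + 1) then (c ⟨i, h⟩).1 else .nil

theorem entry_of_mem {i : ℕ} (h : i ∈ Icc 1 (r + 1)) : c.entry i = (c ⟨i, h⟩).1 := dif_pos h

theorem isMonoLE_entry (i : ℕ) : (c.entry i).IsMonoLE (m i - (c.entry i).1) := by
  unfold entry
  split_ifs with h
  · exact (c ⟨i, h⟩).2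
  · exact NatTuple.isMonoLE_of_fst_eq_zero rfl _

theorem fst_entry_le (i : ℕ) : (c.entry i).1 ≤ m i := by
  unfold entry
  split_ifs with h
  · exact (c ⟨i, h⟩).fst_le
  · exact Nat.zero_le _

/-- The weight `m'` left for the first `r` columns: `m'ᵢ = mᵢ + ℓ_{i+1,r+1} - ℓ_{i,r+1}`. -/
def reduce (i : ℕ) : ℕ := m i + (c.entry (i + 1)).1 - (c.entry i).1

theorem cast_reduce (i : ℕ) :
    (c.reduce i : ℤ) = m i + (c.entry (i + 1)).1 - (c.entry i).1 := by
  have := c.fst_entry_le i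
  unfold reduce
  omega

theorem brBound_succ {f g : ℕ → ℕ → NatTuple} (hf : ∀ i, (f i (r + 1)).1 = (c.entry i).1)
    (hfg : ∀ i p, p ≤ r → (f i p).1 = (g i p).1) {i j : ℕ} (hj : j ≤ r) :
    brBound (r + 1) m f i j = brBound r c.reduce g i j := by
  have hsum (i' a : ℕ) : ∑ p ∈ Icc a r, ((f i' p).1 : ℤ) = ∑ p ∈ Icc a r, ((g i' p).1 : ℤ) :=
    sum_congr rfl fun p hp => by rw [hfg i' p (mem_Icc.1 hp).2]
  rw [brBound, brBound, sum_Icc_succ_top (by omega), sum_Icc_succ_top (by omega), c.cast_reduce,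
    hf, hf, hsum, hsum]
  ring

end LastCol

section SetCol

open Function

variable {ι κ α : Type*} [DecidableEq κ]

def setCol (f : ι → κ → α) (k : κ) (c : ι → α) : ι → κ → α := fun i => update (f i) k (c i)

@[simp]
theorem setCol_self (f : ι → κ → α) (k : κ) (c : ι → α) (i : ι) : setCol f k c i k = c i :=
  update_self _ _ _

theorem setCol_of_ne (f : ι → κ → α) {j k : κ} (c : ι → α) (i : ι) (h : j ≠ k) :
    setCol f k c i j = f i j :=
  update_of_ne h _ _

@[simp]
theorem setCol_setCol (f : ι → κ → α) (k : κ) (c c' : ι → α) :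
    setCol (setCol f k c) k c' = setCol f k c' :=
  funext fun _ => update_idem _ _ _

theorem setCol_eq_self {f : ι → κ → α} {k : κ} {c : ι → α} (h : ∀ i, f i k = c i) :
    setCol f k c = f :=
  funext fun i => update_eq_self_iff.2 (h i).symm

end SetCol

namespace Br

variable {r : ℕ} {m : ℕ → ℕ}

def lastCol (x : Br (r + 1) m) : LastCol r m :=
  fun i => ⟨x.1 i (r + 1), brBound_self ▸ x.2.2 i (r + 1)⟩

theorem entry_lastCol (x : Br (r + 1) m) (i : ℕ) : x.lastCol.entry i = x.1 i (r + 1) := by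
  unfold LastCol.entry
  split_ifs with h
  · rfl
  · exact (x.apply_eq_nil (by simp only [mem_Icc] at h; omega)).symm

theorem isBr_setCol_nil (x : Br (r + 1) m) :
    IsBr r x.lastCol.reduce (setCol x.1 (r + 1) fun _ => .nil) := by
  refine ⟨fun i j h => ?_, fun i j => ?_⟩
  · by_cases hj : j = r + 1
    · subst hj
      simp [NatTuple.nil] at h
    · rw [setCol_of_ne _ _ _ hj] at h
      have := x.2.1 i j h
      omega
  · by_cases hj : j = r + 1
    · subst hj
      exact NatTuple.isMonoLE_of_fst_eq_zero (by simp [NatTuple.nil]) _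
    rw [setCol_of_ne _ _ _ hj]
    by_cases h0 : (x.1 i j).1 = 0
    · exact NatTuple.isMonoLE_of_fst_eq_zero h0 _
    have hjr : j ≤ r := by have := x.2.1 i j h0; omega
    rw [← x.lastCol.brBound_succ (fun i => by rw [entry_lastCol])
      (fun i p hp => by rw [setCol_of_ne _ _ _ (by omega)]) hjr]
    exact x.2.2 i j

theorem isBr_setCol_entry (c : LastCol r m) (y : Br r c.reduce) :
    IsBr (r + 1) m (setCol y.1 (r + 1) c.entry) := by
  refine ⟨fun i j h => ?_, fun i j => ?_⟩
  · by_cases hj : j = r + 1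
    · subst hj
      rw [setCol_self] at h
      unfold LastCol.entry at h
      split_ifs at h with hi
      · simp only [mem_Icc] at hi; omega
      · exact absurd rfl h
    · rw [setCol_of_ne _ _ _ hj] at h
      have := y.2.1 i j h
      omega
  · by_cases hj : j = r + 1
    · subst hj
      rw [brBound_self, setCol_self]
      exact c.isMonoLE_entry i
    rw [setCol_of_ne _ _ _ hj]
    by_cases h0 : (y.1 i j).1 = 0
    · exact NatTuple.isMonoLE_of_fst_eq_zero h0 _
    have hjr : j ≤ r := (y.2.1 i j h0).2.2
    rw [c.brBound_succ (fun i => by rw [setCol_self])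
      (fun i p hp => by rw [setCol_of_ne _ _ _ (by omega)]) hjr]
    exact y.2.2 i j

theorem lastCol_setCol (c : LastCol r m) (y : Br r c.reduce) :
    lastCol ⟨_, isBr_setCol_entry c y⟩ = c :=
  funext fun i => Subtype.ext <| by
    simp only [lastCol, setCol_self, c.entry_of_mem i.2]

def lastColFiberEquiv (c : LastCol r m) : {x : Br (r + 1) m // x.lastCol = c} ≃ Br r c.reduce where
  toFun x := ⟨_, x.2 ▸ isBr_setCol_nil x.1⟩
  invFun y := ⟨⟨_, isBr_setCol_entry c y⟩, lastCol_setCol c y⟩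
  left_inv := by
    rintro ⟨x, rfl⟩
    exact Subtype.ext <| Subtype.ext <| (setCol_setCol _ _ _ _).trans <|
      setCol_eq_self fun i => (x.entry_lastCol i).symm
  right_inv y := Subtype.ext <| (setCol_setCol _ _ _ _).trans <|
    setCol_eq_self fun _ => y.apply_eq_nil (by omega)

instance finite (r : ℕ) (m : ℕ → ℕ) : Finite (Br r m) := by
  induction r generalizing m with
  | zero => infer_instance
  | succ r ih =>
    have (c : LastCol r m) := Finite.of_equiv _ (lastColFiberEquiv c).symm
    exact Finite.of_equiv _ (Equiv.sigmaFiberEquiv lastCol)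

theorem card_succ (r : ℕ) (m : ℕ → ℕ) :
    Nat.card (Br (r + 1) m) = ∑ c : LastCol r m, Nat.card (Br r c.reduce) := by
  rw [← Nat.card_congr (Equiv.sigmaFiberEquiv lastCol), Nat.card_sigma]
  exact Fintype.sum_congr _ _ fun c => Nat.card_congr (lastColFiberEquiv c)

end Br

theorem prod_Icc_pow_add_sub {M : Type*} [CommMonoid M] {r : ℕ} {a : ℕ → M} (ha0 : a 0 = 1)
    (ha : a (r + 1) = 1) {m ℓ : ℕ → ℕ} (hℓ : ∀ i, ℓ i ≤ m i) :
    ∏ i ∈ Icc 1 r, a i ^ (m i + ℓ (i + 1) - ℓ i) =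
      ∏ i ∈ Icc 1 (r + 1), a i ^ (m i - ℓ i) * a (i - 1) ^ ℓ i := by
  have hshift : ∏ i ∈ Icc 1 (r + 1), a (i - 1) ^ ℓ i = ∏ i ∈ Icc 1 r, a i ^ ℓ (i + 1) := by
    rw [← map_add_right_Icc 0 r 1, prod_map, ← mul_prod_Ioc_eq_prod_Icc (Nat.zero_le r),
      ← Icc_add_one_left_eq_Ioc]
    simp [ha0]
  rw [prod_mul_distrib, hshift, prod_Icc_succ_top (by omega), ha, one_pow, mul_one,
    ← prod_mul_distrib]
  refine prod_congr rfl fun i _ => ?_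
  rw [← pow_add, Nat.sub_add_comm (hℓ i)]

theorem sum_choose_mul_pow_choose (R n : ℕ) {i : ℕ} (hi : 1 ≤ i) :
    ∑ k ∈ range (n + 1), n.choose k * (R.choose i ^ (n - k) * R.choose (i - 1) ^ k) =
      (R + 1).choose i ^ n := by
  obtain ⟨i, rfl⟩ := Nat.exists_eq_add_of_le' hi
  rw [Nat.choose_succ_succ', add_pow]
  refine sum_congr rfl fun k _ => ?_
  rw [Nat.add_sub_cancel, Nat.cast_id]
  ring

theorem card_br (r : ℕ) (m : ℕ → ℕ) :
    Nat.card (Br r m) = ∏ i ∈ Icc 1 r, (r + 1).choose i ^ m i := by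
  induction r generalizing m with
  | zero => simp
  | succ r ih =>
    calc Nat.card (Br (r + 1) m)
        = ∑ c : LastCol r m, ∏ i ∈ Icc 1 r, (r + 1).choose i ^ c.reduce i := by
          simp only [Br.card_succ, ih]
      _ = ∑ c : LastCol r m, ∏ i : Icc 1 (r + 1),
            (r + 1).choose i ^ (m i - (c i).1.1) * (r + 1).choose (i - 1) ^ (c i).1.1 := by
          refine Fintype.sum_congr _ _ fun c => ?_
          simp only [LastCol.reduce]
          rw [prod_Icc_pow_add_sub (Nat.choose_zero_right _) (Nat.choose_self _)
            c.fst_entry_le, ← prod_coe_sort]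
          refine Fintype.prod_congr _ _ fun i => ?_
          rw [c.entry_of_mem i.2]
      _ = ∏ i : Icc 1 (r + 1), ∑ t : ColEntry (m i),
            (r + 1).choose i ^ (m i - t.1.1) * (r + 1).choose (i - 1) ^ t.1.1 :=
          (Fintype.prod_sum fun (i : Icc 1 (r + 1)) (t : ColEntry (m i)) =>
            (r + 1).choose i ^ (m i - t.1.1) * (r + 1).choose (i - 1) ^ t.1.1).symm
      _ = ∏ i : Icc 1 (r + 1), (r + 1 + 1).choose i ^ m i := by
          refine Fintype.prod_congr _ _ fun i => ?_
          rw [ColEntry.sum_fst (m i) fun k =>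
              (r + 1).choose i ^ (m i - k) * (r + 1).choose (i - 1) ^ k,
            sum_choose_mul_pow_choose _ _ (mem_Icc.1 i.2).1]
      _ = ∏ i ∈ Icc 1 (r + 1), (r + 1 + 1).choose i ^ m i :=
          prod_coe_sort (Icc 1 (r + 1)) fun i => (r + 1 + 1).choose i ^ m i

/-- For `λ = Σ_{i=1}^r m_i ω_i`, the set `B^r(λ)` of tuples `(ℓ_{i,j}, s_{i,j})_{1 ≤ i ≤ j ≤ r}`,
where each `s_{i,j}` is a weakly increasing sequence of length `ℓ_{i,j}` of nonnegative
integers whose last entry satisfies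
`s_{i,j}(ℓ_{i,j}) ≤ m_i + Σ_{p=j+1}^r ℓ_{i+1,p} − Σ_{p=j}^r ℓ_{i,p}` (or `ℓ_{i,j} = 0`),
has cardinality `Π_{i=1}^r C(r+1, i)^{m_i}`.

Here `ℓ : ℕ → ℕ → ℕ` is supported on pairs `1 ≤ i ≤ j ≤ r` (by convention `ℓ_{i,j} = 0`
outside this range, in particular `ℓ_{r+1,p} = 0`), and the bound is an inequality of
integers. -/
theorem card_Br_lambda (r : ℕ) (m : ℕ → ℕ) :
    Nat.card {x : Σ ℓ : ℕ → ℕ → ℕ, ∀ i j, Fin (ℓ i j) → ℕ //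
      (∀ i j, x.1 i j ≠ 0 → 1 ≤ i ∧ i ≤ j ∧ j ≤ r) ∧
      (∀ i j, Monotone (x.2 i j)) ∧
      (∀ i j, ∀ h : x.1 i j ≠ 0,
        (x.2 i j ⟨x.1 i j - 1, Nat.sub_lt (Nat.pos_of_ne_zero h) Nat.one_pos⟩ : ℤ) ≤
          (m i : ℤ) + ∑ p ∈ Finset.Icc (j + 1) r, (x.1 (i + 1) p : ℤ)
            - ∑ p ∈ Finset.Icc j r, (x.1 i p : ℤ))} =
    ∏ i ∈ Finset.Icc 1 r, (r + 1).choose i ^ m i := by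
  rw [← card_br, Nat.card_congr (NatTuple.arrayEquiv.subtypeEquiv fun x => ?_)]
  simp only [IsBr, NatTuple.isMonoLE_iff_last_le, forall_and]
  rfl
end

section
/- Let g be a finite-dimensional complex semisimple Lie algebra, λ_1, ..., λ_k dominant integral weights, and a_1, ..., a_k pairwise distinct complex numbers. For each i let V_{a_i}(λ_i) be the g[t]-module obtained by pulling back the irreducible highest weight module V(λ_i) along the evaluation homomorphism ev_{a_i} : g[t] → g, x ⊗ p(t) ↦ p(a_i)x. Then the tensor product V_{a_1}(λ_1) ⊗ ··· ⊗ V_{a_k}(λ_k) is an irreducible g[t]-module. -/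
open scoped TensorProduct

/-!
Combining the actions of `x ⊗ t^s` for `s = 0, 1, …` with Lagrange interpolation at the
distinct points `a_j` shows that `W` is stable under `x` acting on a single factor `V_j`.
By Burnside's theorem these operators generate all of `End V_j`, so `W` is stable under every
`f_1 ⊗ ⋯ ⊗ f_k`. Among these are rank-one maps sending a suitable nonzero `z ∈ W` to an
arbitrary pure tensor, so a nonzero `W` is everything.
-/

open Module

namespace Subalgebra

variable {K M : Type*} [Field K] [AddCommGroup M] [Module K M] (A : Subalgebra K (End K M))

theorem exists_eq_smul_of_isSimpleModule [IsAlgClosed K] [FiniteDimensional K M]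
    [IsSimpleModule A M] (φ : M →ₗ[A] M) : ∃ μ : K, ∀ m, φ m = μ • m := by
  have := IsSimpleModule.nontrivial A M
  obtain ⟨μ, hμ⟩ := End.exists_eigenvalue (φ.restrictScalars K)
  let E : Submodule A M :=
    { carrier := {m | φ m = μ • m}
      add_mem' := fun {x y} hx hy => by simp_all [smul_add]
      zero_mem' := by simp
      smul_mem' := fun a m hm => by
        simp only [Set.mem_ofPred_eq, map_smul] at hm ⊢
        rw [hm]; exact (a : End K M).map_smul μ m }
  obtain ⟨v, hv⟩ := hμ.exists_hasEigenvector
  have hE : E = ⊤ := (eq_bot_or_eq_top E).resolve_left fun h =>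
    hv.2 <| (Submodule.eq_bot_iff E).mp h v hv.apply_eq_smul
  exact ⟨μ, fun m => (hE ▸ Submodule.mem_top : m ∈ E)⟩

theorem eq_top_of_isSimpleModule [IsAlgClosed K] [FiniteDimensional K M] [IsSimpleModule A M] :
    A = ⊤ := by
  classical
  refine eq_top_iff.mpr fun T _ => ?_
  -- By Schur, `T` commutes with `End_A M`, so Jacobson density applies to it.
  let f : End (M →ₗ[A] M) M :=
    { toFun := T
      map_add' := T.map_add
      map_smul' := fun φ m => by
        obtain ⟨μ, hμ⟩ := exists_eq_smul_of_isSimpleModule A φ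
        simp [End.smul_def, hμ] }
  let b := Module.finBasis K M
  obtain ⟨r, hr⟩ := jacobson_density f (Finset.univ.image b)
  have : (r : End K M) = T := b.ext fun i => (hr (b i) (by simp)).symm
  exact this ▸ r.2

end Subalgebra

theorem LieModule.isSimpleModule_adjoin_range_toEnd {K L M : Type*} [Field K] [LieRing L]
    [LieAlgebra K L] [AddCommGroup M] [Module K M] [LieRingModule L M] [LieModule K L M]
    [LieModule.IsIrreducible K L M] :
    IsSimpleModule (Algebra.adjoin K (Set.range (toEnd K L M))) M := by
  have := LieModule.nontrivial_of_isIrreducible K L M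
  refine { eq_bot_or_eq_top := fun N => ?_ }
  let N' : LieSubmodule K L M :=
    { N.restrictScalars K with
      lie_mem := fun {x m} hm =>
        N.smul_mem ⟨toEnd K L M x, Algebra.subset_adjoin ⟨x, rfl⟩⟩ hm }
  rcases eq_bot_or_eq_top N' with h | h
  · refine .inl (eq_bot_iff.mpr fun m hm => ?_)
    have : m ∈ N' := hm
    simpa [h] using this
  · exact .inr (eq_top_iff.mpr fun m _ => (h ▸ LieSubmodule.mem_top m : m ∈ N'))

theorem LieModule.adjoin_range_toEnd_eq_top {K L M : Type*} [Field K] [IsAlgClosed K] [LieRing L]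
    [LieAlgebra K L] [AddCommGroup M] [Module K M] [FiniteDimensional K M] [LieRingModule L M]
    [LieModule K L M] [LieModule.IsIrreducible K L M] :
    Algebra.adjoin K (Set.range (toEnd K L M)) = ⊤ :=
  have := isSimpleModule_adjoin_range_toEnd (K := K) (L := L) (M := M)
  Subalgebra.eq_top_of_isSimpleModule _

namespace Submodule

variable {R N : Type*} [CommSemiring R] [AddCommMonoid N] [Module R N]

def stabilizerSubalgebra (W : Submodule R N) : Subalgebra R (Module.End R N) where
  carrier := {T | ∀ w ∈ W, T w ∈ W}
  mul_mem' hS hT w hw := hS _ (hT w hw)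
  add_mem' hS hT w hw := W.add_mem (hS w hw) (hT w hw)
  algebraMap_mem' c _ hw := W.smul_mem c hw

theorem mem_of_forall_sum_pow_smul_mem {K N ι : Type*} [Field K] [AddCommGroup N] [Module K N]
    [Fintype ι] {W : Submodule K N} {a : ι → K} (ha : Function.Injective a) {u : ι → N}
    (h : ∀ s : ℕ, ∑ j, a j ^ s • u j ∈ W) (j : ι) : u j ∈ W := by
  classical
  have hpoly : ∀ p : Polynomial K, ∑ i, p.eval (a i) • u i ∈ W := by
    intro p
    induction p using Polynomial.induction_on' with
    | add p q hp hq => simpa [add_smul, Finset.sum_add_distrib] using W.add_mem hp hq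
    | monomial n c => simpa [mul_smul, ← Finset.smul_sum] using W.smul_mem c (h n)
  convert hpoly (Lagrange.basis Finset.univ a j) using 1
  rw [Finset.sum_eq_single j]
  · rw [Lagrange.eval_basis_self ha.injOn (Finset.mem_univ j), one_smul]
  · intro i _ hij
    rw [Lagrange.eval_basis_of_ne hij.symm (Finset.mem_univ i), zero_smul]
  · simp

end Submodule

namespace PiTensorProduct

variable {ι R : Type*} [CommSemiring R] {M : ι → Type*} [∀ i, AddCommMonoid (M i)]
  [∀ i, Module R (M i)]

noncomputable def mapAt [DecidableEq ι] (j : ι) : End R (M j) →ₐ[R] End R (⨂[R] i, M i) :=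
  AlgHom.ofLinearMap ((mapMultilinear R M M).toLinearMap 1 j)
    (show map (Pi.mulSingle j 1) = 1 by rw [Pi.mulSingle_one]; exact map_one mapMonoidHom)
    fun S T => show map (Pi.mulSingle j (S * T)) =
        map (Pi.mulSingle j S) * map (Pi.mulSingle j T) by
      rw [Pi.mulSingle_mul]; exact map_mul mapMonoidHom _ _

theorem mapAt_apply [DecidableEq ι] (j : ι) (T : End R (M j)) :
    mapAt j T = map (Function.update (fun _ => LinearMap.id) j T) := rfl

theorem map_mem_of_forall_mapAt_mem [Fintype ι] [DecidableEq ι]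
    {S : Subalgebra R (End R (⨂[R] i, M i))} (h : ∀ j T, mapAt j T ∈ S)
    (f : Π i, End R (M i)) : map f ∈ S := by
  have hf := Finset.univ.map_noncommProd (fun i => Pi.mulSingle i (f i))
    (fun i _ j _ _ => Pi.mulSingle_apply_commute f i j) (mapMonoidHom (R := R) (s := M))
  rw [Finset.noncommProd_mulSingle, mapMonoidHom_apply] at hf
  rw [hf]
  exact S.toSubmonoid.noncommProd_mem _ _ _ fun j _ => h j (f j)

theorem map_smulRight_coord [Fintype ι] {κ : ι → Type*} (b : Π i, Basis (κ i) R (M i))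
    (p : Π i, κ i) (v : Π i, M i) :
    map (fun i => ((b i).coord (p i)).smulRight (v i)) =
      ((Basis.piTensorProduct b).coord p).smulRight (tprod R v) := by
  ext x
  simp [MultilinearMap.map_smul_univ]

theorem eq_bot_or_eq_top_of_forall_map_mem {K : Type*} [Field K] [Fintype ι] {M : ι → Type*}
    [∀ i, AddCommGroup (M i)] [∀ i, Module K (M i)] (W : Submodule K (⨂[K] i, M i))
    (h : ∀ f : Π i, End K (M i), ∀ w ∈ W, map f w ∈ W) : W = ⊥ ∨ W = ⊤ := by
  refine or_iff_not_imp_left.mpr fun hW => ?_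
  obtain ⟨z, hz, hz0⟩ := W.ne_bot_iff.mp hW
  let b := fun i => Basis.ofVectorSpace K (M i)
  let B := Basis.piTensorProduct b
  obtain ⟨p, hp⟩ : ∃ p, B.coord p z ≠ 0 := by
    by_contra! h0
    exact hz0 (B.forall_coord_eq_zero_iff.mp h0)
  rw [eq_top_iff, ← span_tprod_eq_top, Submodule.span_le]
  rintro _ ⟨v, rfl⟩
  have := W.smul_mem (B.coord p z)⁻¹ (h (fun i => ((b i).coord (p i)).smulRight (v i)) z hz)
  rwa [map_smulRight_coord, LinearMap.smulRight_apply, smul_smul, inv_mul_cancel₀ hp,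
    one_smul] at this

end PiTensorProduct

open PiTensorProduct in
theorem evaluation_tensor_product_irreducible_general
    (g : Type*) [LieRing g] [LieAlgebra ℂ g]
    (k : ℕ) (V : Fin k → Type*) [∀ i, AddCommGroup (V i)] [∀ i, Module ℂ (V i)]
    [∀ i, LieRingModule g (V i)] [∀ i, LieModule ℂ g (V i)]
    [∀ i, FiniteDimensional ℂ (V i)]
    (hirr : ∀ i, LieModule.IsIrreducible ℂ g (V i))
    (a : Fin k → ℂ) (ha : Function.Injective a)
    (W : Submodule ℂ (⨂[ℂ] i, V i))
    (hW : ∀ (x : g) (s : ℕ), ∀ w ∈ W,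
      (∑ j : Fin k, a j ^ s •
        PiTensorProduct.map
          (Function.update (fun i => (LinearMap.id : V i →ₗ[ℂ] V i)) j
            (LieModule.toEnd ℂ g (V j) x))) w ∈ W) :
    W = ⊥ ∨ W = ⊤ := by
  have hgen : ∀ j x, mapAt j (LieModule.toEnd ℂ g (V j) x) ∈ W.stabilizerSubalgebra :=
    fun j x w hw => W.mem_of_forall_sum_pow_smul_mem ha
      (fun s => by simpa [LinearMap.sum_apply, mapAt_apply] using hW x s w hw) j
  have hslot : ∀ j T, mapAt j T ∈ W.stabilizerSubalgebra := by
    intro j T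
    have := hirr j
    have hle : Algebra.adjoin ℂ (Set.range (LieModule.toEnd ℂ g (V j))) ≤
        W.stabilizerSubalgebra.comap (mapAt j) :=
      Algebra.adjoin_le (Set.range_subset_iff.mpr (hgen j))
    rw [LieModule.adjoin_range_toEnd_eq_top] at hle
    exact hle Algebra.mem_top
  exact eq_bot_or_eq_top_of_forall_map_mem W fun f => map_mem_of_forall_mapAt_mem hslot f

/-- Let `g` be a finite-dimensional complex semisimple Lie algebra, `V 1, …, V k`
irreducible finite-dimensional `g`-modules (the irreducible highest weight modules
`V(λ_i)`), and `a 1, …, a k` pairwise distinct complex numbers.  The evaluation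
tensor product `V_{a_1}(λ_1) ⊗ ⋯ ⊗ V_{a_k}(λ_k)` is an irreducible `g[t]`-module:
any subspace `W` invariant under the action of every `x ⊗ t^s`
(which acts as `Σ_j a_j^s · x^{(j)}`, i.e. `x` in the `j`-th slot weighted by `a_j^s`)
is `⊥` or `⊤`. -/
theorem evaluation_tensor_product_irreducible
    (g : Type*) [LieRing g] [LieAlgebra ℂ g] [Module.Finite ℂ g]
    [LieAlgebra.IsSemisimple ℂ g]
    (k : ℕ) (V : Fin k → Type*) [∀ i, AddCommGroup (V i)] [∀ i, Module ℂ (V i)]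
    [∀ i, LieRingModule g (V i)] [∀ i, LieModule ℂ g (V i)]
    [∀ i, FiniteDimensional ℂ (V i)]
    (hirr : ∀ i, LieModule.IsIrreducible ℂ g (V i))
    (a : Fin k → ℂ) (ha : Function.Injective a)
    (W : Submodule ℂ (⨂[ℂ] i, V i))
    (hW : ∀ (x : g) (s : ℕ), ∀ w ∈ W,
      (∑ j : Fin k, a j ^ s •
        PiTensorProduct.map
          (Function.update (fun i => (LinearMap.id : V i →ₗ[ℂ] V i)) j
            (LieModule.toEnd ℂ g (V j) x))) w ∈ W) :
    W = ⊥ ∨ W = ⊤ :=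
  evaluation_tensor_product_irreducible_general g k V hirr a ha W hW
end
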